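/- Let G be a graph on {1,...,n} and let B be any symmetric n×n real matrix with B_{ii} = 1 for all i, B_{ij} ≥ 1 whenever {i,j} ∈ E(G), and B_{ij} = 0 whenever i ≠ j and {i,j} ∉ E(G). Then the minimum of x^T B x over the standard simplex Δ_n equals 1/α(G). -/

import Mathlib

/-!
If the support of `x ∈ Δ_n` is independent, then `xᵀBx = ∑ xᵢ² ≥ 1 / |supp x| ≥ 1 / α(G)` by
Cauchy–Schwarz, with equality for the uniform distribution on a maximum independent set. A
general point is reduced to this case: if the support contains an edge `ij`, the form is concave
along `e_j - e_i` because `B_ii + B_jj ≤ 2 B_ij`, so moving all the mass of one endpoint onto the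
other, towards the smaller of `(Bx)_i` and `(Bx)_j`, does not increase it and shrinks the
support.
-/

open Finset Matrix

/-- The stability number: the maximum cardinality of a stable (independent) set. -/
noncomputable def alpha {V : Type*} [Fintype V] (G : SimpleGraph V) : ℕ :=
  sSup {k | ∃ S : Finset V, (∀ i ∈ S, ∀ j ∈ S, ¬ G.Adj i j) ∧ S.card = k}

namespace SimpleGraph

variable {V : Type*} (G : SimpleGraph V)

lemma isIndepSet_iff_forall_not_adj {S : Set V} :
    G.IsIndepSet S ↔ ∀ i ∈ S, ∀ j ∈ S, ¬ G.Adj i j :=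
  ⟨fun h _ hi _ hj hij => h hi hj (G.ne_of_adj hij) hij, fun h i hi j hj _ => h i hi j hj⟩

lemma alpha_eq_indepNum [Fintype V] : alpha G = G.indepNum := by
  unfold alpha indepNum
  simp only [isNIndepSet_iff, isIndepSet_iff_forall_not_adj, Finset.mem_coe]

lemma one_le_indepNum [Finite V] [Nonempty V] : 1 ≤ G.indepNum := by
  inhabit V
  simpa using (G.isIndepSet_iff_forall_not_adj.2 (by simp) :
    G.IsIndepSet (({default} : Finset V) : Set V)).card_le_indepNum

end SimpleGraph

namespace Matrix

variable {ι R : Type*} [Fintype ι]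

lemma add_smul_dotProduct_mulVec_add_smul [CommRing R] {B : Matrix ι ι R} (hB : B.IsSymm)
    (x v : ι → R) (t : R) :
    (x + t • v) ⬝ᵥ (B *ᵥ (x + t • v)) =
      x ⬝ᵥ (B *ᵥ x) + 2 * t * (v ⬝ᵥ (B *ᵥ x)) + t ^ 2 * (v ⬝ᵥ (B *ᵥ v)) := by
  have hcomm : x ⬝ᵥ (B *ᵥ v) = v ⬝ᵥ (B *ᵥ x) := by
    rw [dotProduct_mulVec, ← mulVec_transpose, hB.eq, dotProduct_comm]
  simp only [mulVec_add, mulVec_smul, add_dotProduct, dotProduct_add, smul_dotProduct,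
    dotProduct_smul, smul_eq_mul, hcomm]
  ring

end Matrix

section TransferMass

variable {ι : Type*} [DecidableEq ι]

def transferMass (x : ι → ℝ) (i j : ι) : ι → ℝ :=
  x + x i • (Pi.single j 1 - Pi.single i 1)

variable {x : ι → ℝ} {i j : ι}

lemma transferMass_apply (x : ι → ℝ) (i j k : ι) :
    transferMass x i j k =
      x k + x i * ((Pi.single j 1 : ι → ℝ) k - (Pi.single i 1 : ι → ℝ) k) := rfl

lemma transferMass_apply_left (hij : i ≠ j) : transferMass x i j i = 0 := by
  simp [transferMass_apply, hij]

lemma transferMass_apply_of_ne {k : ι} (hki : k ≠ i) (hkj : k ≠ j) :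
    transferMass x i j k = x k := by
  simp [transferMass_apply, hki, hkj]

lemma support_transferMass_ssubset (hij : i ≠ j) (hi : x i ≠ 0) (hj : x j ≠ 0) :
    Function.support (transferMass x i j) ⊂ Function.support x := by
  refine (Set.ssubset_iff_of_subset fun k hk => ?_).2
    ⟨i, hi, fun h => h (transferMass_apply_left hij)⟩
  rcases eq_or_ne k i with rfl | hki
  · exact hi
  rcases eq_or_ne k j with rfl | hkj
  · exact hj
  · rwa [Function.mem_support, transferMass_apply_of_ne hki hkj] at hk

variable [Fintype ι]

lemma transferMass_mem_stdSimplex (hij : i ≠ j) (hx : x ∈ stdSimplex ℝ ι) :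
    transferMass x i j ∈ stdSimplex ℝ ι := by
  refine ⟨fun k => ?_, ?_⟩
  · rcases eq_or_ne k i with rfl | hki
    · rw [transferMass_apply_left hij]
    rcases eq_or_ne k j with rfl | hkj
    · simpa [transferMass_apply, hki] using add_nonneg (hx.1 k) (hx.1 i)
    · rw [transferMass_apply_of_ne hki hkj]; exact hx.1 k
  · simp [transferMass_apply, Finset.sum_add_distrib, ← Finset.mul_sum, hx.2]

/-- Along `e_j - e_i` the quadratic form has slope `(Bx)_j - (Bx)_i` and curvature
`B_ii + B_jj - 2 B_ij`, both nonpositive here. -/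
lemma transferMass_dotProduct_mulVec_le {B : Matrix ι ι ℝ} (hB : B.IsSymm)
    (hcurv : B i i + B j j ≤ 2 * B i j) (hslope : (B *ᵥ x) j ≤ (B *ᵥ x) i) (hxi : 0 ≤ x i) :
    transferMass x i j ⬝ᵥ (B *ᵥ transferMass x i j) ≤ x ⬝ᵥ (B *ᵥ x) := by
  rw [transferMass, add_smul_dotProduct_mulVec_add_smul hB]
  have hslope' : (Pi.single j 1 - Pi.single i 1) ⬝ᵥ (B *ᵥ x) ≤ 0 := by
    simpa [sub_dotProduct, single_dotProduct] using hslope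
  have hcurv' :
      (Pi.single j 1 - Pi.single i 1) ⬝ᵥ (B *ᵥ (Pi.single j 1 - Pi.single i 1)) ≤ 0 := by
    simp only [mulVec_sub, mulVec_single, MulOpposite.op_one, one_smul, dotProduct_sub,
      sub_dotProduct, single_dotProduct, col_apply, one_mul, hB.apply i j]
    linarith
  nlinarith [mul_nonpos_of_nonneg_of_nonpos hxi hslope',
    mul_nonpos_of_nonneg_of_nonpos (sq_nonneg (x i)) hcurv']

end TransferMass

section IndepSupport

variable {ι : Type*} [Fintype ι] {G : SimpleGraph ι} {B : Matrix ι ι ℝ} {x : ι → ℝ}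

theorem exists_isIndepSet_support_dotProduct_mulVec_le [DecidableEq ι] (hB : B.IsSymm)
    (hcurv : ∀ i j, G.Adj i j → B i i + B j j ≤ 2 * B i j) (hx : x ∈ stdSimplex ℝ ι) :
    ∃ y ∈ stdSimplex ℝ ι, G.IsIndepSet (Function.support y) ∧
      y ⬝ᵥ (B *ᵥ y) ≤ x ⬝ᵥ (B *ᵥ x) := by
  induction hm : (Function.support x).ncard using Nat.strong_induction_on generalizing x with
  | _ m ih =>
  by_cases hind : G.IsIndepSet (Function.support x)
  · exact ⟨x, hx, hind, le_rfl⟩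
  obtain ⟨i, hi, j, hj, hadj⟩ : ∃ i, x i ≠ 0 ∧ ∃ j, x j ≠ 0 ∧ G.Adj i j := by
    simpa [G.isIndepSet_iff_forall_not_adj] using hind
  wlog hslope : (B *ᵥ x) j ≤ (B *ᵥ x) i generalizing i j
  · exact this j hj i hi hadj.symm (le_of_not_ge hslope)
  have hij := G.ne_of_adj hadj
  obtain ⟨y, hy, hyind, hyle⟩ := ih _
    (hm ▸ Set.ncard_lt_ncard (support_transferMass_ssubset hij hi hj))
    (transferMass_mem_stdSimplex hij hx) rfl
  exact ⟨y, hy, hyind, hyle.trans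
    (transferMass_dotProduct_mulVec_le hB (hcurv i j hadj) hslope (hx.1 i))⟩

lemma dotProduct_mulVec_eq_sum_sq_of_isIndepSet (hdiag : ∀ i, B i i = 1)
    (hnonedge : ∀ i j, i ≠ j → ¬ G.Adj i j → B i j = 0)
    (hind : G.IsIndepSet (Function.support x)) :
    x ⬝ᵥ (B *ᵥ x) = ∑ i, x i ^ 2 := by
  refine Finset.sum_congr rfl fun i _ => ?_
  by_cases hi : x i = 0
  · simp [hi]
  have hrow : (B *ᵥ x) i = x i := by
    refine (Finset.sum_eq_single i (fun j _ hji => ?_) (by simp)).trans (by simp [hdiag])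
    by_cases hj : x j = 0
    · simp [hj]
    · simp [hnonedge i j hji.symm (G.isIndepSet_iff_forall_not_adj.1 hind i hi j hj)]
  rw [hrow, sq]

lemma one_le_card_mul_sum_sq {s : Finset ι} (hs : Function.support x ⊆ s)
    (hx : x ∈ stdSimplex ℝ ι) : 1 ≤ #s * ∑ i, x i ^ 2 := by
  have hsum : ∀ f : ι → ℝ, Function.support f ⊆ s → ∑ i ∈ s, f i = ∑ i, f i := fun f hf =>
    Finset.sum_subset (Finset.subset_univ s) fun i _ his => Function.notMem_support.1 (hf.mt his)
  calc (1 : ℝ) = (∑ i ∈ s, x i) ^ 2 := by rw [hsum x hs, hx.2, one_pow]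
    _ ≤ #s * ∑ i ∈ s, x i ^ 2 := sq_sum_le_card_mul_sum_sq
    _ = #s * ∑ i, x i ^ 2 := by
      rw [hsum (fun i => x i ^ 2) (by simpa [Function.support_pow] using hs)]

end IndepSupport

section MotzkinStraus

variable {ι : Type*} [Fintype ι] {G : SimpleGraph ι} {B : Matrix ι ι ℝ}

lemma exists_mem_stdSimplex_dotProduct_mulVec_eq_one_div_card (hdiag : ∀ i, B i i = 1)
    (hnonedge : ∀ i j, i ≠ j → ¬ G.Adj i j → B i j = 0) {S : Finset ι} (hS : S.Nonempty)
    (hind : G.IsIndepSet S) :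
    ∃ x ∈ stdSimplex ℝ ι, x ⬝ᵥ (B *ᵥ x) = 1 / #S := by
  classical
  have hcard : (#S : ℝ) ≠ 0 := by exact_mod_cast hS.card_pos.ne'
  set x : ι → ℝ := fun k => if k ∈ S then (#S : ℝ)⁻¹ else 0
  have hsupp : Function.support x = S := by
    ext k; by_cases hk : k ∈ S <;> simp [x, hk, hcard]
  refine ⟨x, ⟨fun k => by positivity, ?_⟩, ?_⟩
  · simp [x, Finset.sum_ite_mem, hcard]
  · rw [dotProduct_mulVec_eq_sum_sq_of_isIndepSet hdiag hnonedge (hsupp ▸ hind)]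
    simp only [x, apply_ite (· ^ 2), inv_pow, ne_eq, OfNat.ofNat_ne_zero, not_false_eq_true,
      zero_pow, sum_ite_mem, univ_inter, sum_const, nsmul_eq_mul]
    field_simp

lemma one_div_indepNum_le_dotProduct_mulVec [Nonempty ι] (hB : B.IsSymm)
    (hdiag : ∀ i, B i i = 1) (hedge : ∀ i j, G.Adj i j → 1 ≤ B i j)
    (hnonedge : ∀ i j, i ≠ j → ¬ G.Adj i j → B i j = 0) {x : ι → ℝ}
    (hx : x ∈ stdSimplex ℝ ι) :
    1 / (G.indepNum : ℝ) ≤ x ⬝ᵥ (B *ᵥ x) := by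
  classical
  obtain ⟨y, hy, hind, hyx⟩ := exists_isIndepSet_support_dotProduct_mulVec_le hB
    (fun i j hij => by linarith [hdiag i, hdiag j, hedge i j hij]) hx
  have hα : (0 : ℝ) < G.indepNum := by exact_mod_cast G.one_le_indepNum
  have hcard : 1 ≤ (G.indepNum : ℝ) * ∑ i, y i ^ 2 := by
    refine (one_le_card_mul_sum_sq (s := (Function.support y).toFinset) (by simp) hy).trans ?_
    gcongr
    exact_mod_cast SimpleGraph.IsIndepSet.card_le_indepNum (by simpa using hind)
  rw [div_le_iff₀ hα, mul_comm]
  calc 1 ≤ (G.indepNum : ℝ) * ∑ i, y i ^ 2 := hcard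
    _ = G.indepNum * (y ⬝ᵥ (B *ᵥ y)) := by
      rw [dotProduct_mulVec_eq_sum_sq_of_isIndepSet hdiag hnonedge hind]
    _ ≤ G.indepNum * (x ⬝ᵥ (B *ᵥ x)) := by gcongr

end MotzkinStraus

/-- Generalized Motzkin–Straus: for any `B ∈ B(G)`, the minimum of `xᵀBx` over the
standard simplex equals `1/α(G)`. -/
theorem motzkin_straus_B {n : ℕ} (hn : 0 < n) (G : SimpleGraph (Fin n))
    (B : Matrix (Fin n) (Fin n) ℝ) (hsymm : B.IsSymm)
    (hdiag : ∀ i, B i i = 1)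
    (hedge : ∀ i j, G.Adj i j → 1 ≤ B i j)
    (hnonedge : ∀ i j, i ≠ j → ¬ G.Adj i j → B i j = 0) :
    IsLeast {v : ℝ | ∃ x ∈ stdSimplex ℝ (Fin n), v = x ⬝ᵥ (B *ᵥ x)} (1 / (alpha G : ℝ)) := by
  have : Nonempty (Fin n) := ⟨⟨0, hn⟩⟩
  rw [G.alpha_eq_indepNum]
  obtain ⟨S, hS⟩ := G.exists_isNIndepSet_indepNum
  refine ⟨?_, fun v ⟨x, hx, hv⟩ =>
    hv ▸ one_div_indepNum_le_dotProduct_mulVec hsymm hdiag hedge hnonedge hx⟩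
  have hSne : S.Nonempty := Finset.card_pos.1 (hS.card_eq ▸ G.one_le_indepNum)
  obtain ⟨x, hx, hq⟩ :=
    exists_mem_stdSimplex_dotProduct_mulVec_eq_one_div_card hdiag hnonedge hSne hS.isIndepSet
  exact ⟨x, hx, by rw [hq, hS.card_eq]⟩
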